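/- arXiv:2604.12550 — 5 statements merged into one kernel-verified Lean document; each statement's English description precedes it below -/
import Mathlib

section
/- Every irreducible representation over ℂ of a finite quandle Q is finite-dimensional. -/
open scoped Quandles
/-- The inner automorphism group of a rack/quandle `Q`: the subgroup of permutations
of `Q` generated by the left translations `L_x = Rack.act' x`. -/
def QdlInn (Q : Type*) [Rack Q] : Subgroup (Equiv.Perm Q) :=
  Subgroup.closure (Set.range (Rack.act' (R := Q)))

/-- The quandle morphism `θ : Q → Conj (Inn Q)`, `x ↦ L_x`. -/
def QdlTheta (Q : Type*) [Rack Q] : ShelfHom Q (Quandle.Conj (QdlInn Q)) where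
  toFun x := ⟨Rack.act' x, Subgroup.subset_closure ⟨x, rfl⟩⟩
  map_act' := by
    intro x y
    simp only [Quandle.conj_act_eq_conj]
    exact Subtype.ext (Rack.ad_conj x y)

/-- The induced group morphism `θ_{G(Q)} : G(Q) → Inn(Q)`. -/
def QdlThetaG (Q : Type*) [Rack Q] : Rack.EnvelGroup Q →* QdlInn Q :=
  Rack.toEnvelGroup.map (QdlTheta Q)

/-- `Z₀`, the kernel of `θ_{G(Q)}`. -/
def QdlZ0 (Q : Type*) [Rack Q] : Subgroup (Rack.EnvelGroup Q) :=
  (QdlThetaG Q).ker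

section Reps

variable {Q : Type*} {V : Type*} [AddCommGroup V] [Module ℂ V]

/-- `ρ : Q → GL(V)` is a quandle (rack) representation: `ρ(x ◃ y) = ρ(x) ρ(y) ρ(x)⁻¹`. -/
def IsQdlRep [Shelf Q] (ρ : Q → (V →ₗ[ℂ] V)ˣ) : Prop :=
  ∀ x y : Q, ρ (x ◃ y) = ρ x * ρ y * (ρ x)⁻¹

/-- A family `ρ : Q → GL(V)` is irreducible if the only subspaces invariant
under all `ρ x` are `0` and `V`. -/
def QdlIrred (ρ : Q → (V →ₗ[ℂ] V)ˣ) : Prop :=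
  ∀ W : Submodule ℂ V, (∀ x : Q, ∀ v ∈ W, (ρ x : V →ₗ[ℂ] V) v ∈ W) → W = ⊥ ∨ W = ⊤

/-- A group representation `σ : G →* GL(V)` is irreducible if the only subspaces
invariant under all `σ g` are `0` and `V`. -/
def GrpIrred {G : Type*} [Group G] (σ : G →* (V →ₗ[ℂ] V)ˣ) : Prop :=
  ∀ W : Submodule ℂ V, (∀ g : G, ∀ v ∈ W, (σ g : V →ₗ[ℂ] V) v ∈ W) → W = ⊥ ∨ W = ⊤

end Reps

/-- A character of a quandle: a map `χ : Q → ℂˣ` with `χ(x ◃ y) = χ(y)`. -/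
def QdlChar {Q : Type*} [Shelf Q] (χ : Q → ℂˣ) : Prop :=
  ∀ x y : Q, χ (x ◃ y) = χ y

/-!
Let `m = |Sym(Q)|`. Since `L_x ^ m = 1`, the rule `ρ(x) ρ(y) = ρ(x ◃ y) ρ(x)` shows that every
`ρ(x) ^ m` commutes with all of `ρ(Q)`, so these elements generate a finitely generated commutative
algebra `A` that commutes with the representation. The same rule lets one collect all occurrences
of a letter `x` of a word in `ρ(Q)` at its end, so by pigeonhole every word is an element of `A`
times a word of length at most `|Q| (m - 1)`. For `v ≠ 0`, irreducibility gives
`V = span (words · v)`, hence `V` is a finitely generated `A`-module. For every ideal `I` of `A`,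
`I V` is `ρ`-stable, hence `0` or `V`; by Nakayama it is `0` for a maximal ideal, and since `A`
acts faithfully, `A` is a field. By the Nullstellensatz `A` is finite over `ℂ`, and so is `V`.
-/

section FaithfulModule

variable {A V : Type*} [CommRing A] [AddCommGroup V] [Module A V]

theorem isField_of_ideal_smul_top_eq_bot_or_top [Nontrivial A] [Module.Finite A V]
    [FaithfulSMul A V]
    (h : ∀ I : Ideal A, I • (⊤ : Submodule A V) = ⊥ ∨ I • (⊤ : Submodule A V) = ⊤) :
    IsField A := by
  obtain ⟨𝔪, h𝔪⟩ := Ideal.exists_maximal A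
  suffices 𝔪 = ⊥ from not_not.mp fun hA => Ring.ne_bot_of_isMaximal_of_not_isField h𝔪 hA this
  rcases h 𝔪 with hbot | htop
  · refine eq_bot_iff.mpr fun a ha => eq_of_smul_eq_smul (α := V) fun v => ?_
    simpa [hbot] using Submodule.smul_mem_smul ha (Submodule.mem_top : v ∈ ⊤)
  · obtain ⟨r, hr1, hr0⟩ := Submodule.exists_sub_one_mem_and_smul_eq_zero_of_fg_of_le_smul 𝔪 ⊤
      Module.Finite.fg_top htop.ge
    obtain rfl : r = 0 := eq_of_smul_eq_smul fun v => by
      rw [zero_smul]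
      exact hr0 v Submodule.mem_top
    exact absurd ((Ideal.eq_top_iff_one _).mpr (by simpa using 𝔪.neg_mem hr1)) h𝔪.ne_top

theorem Module.finite_of_ideal_smul_top_eq_bot_or_top (K : Type*) [Field K] [Algebra K A]
    [Algebra.FiniteType K A] [Module K V] [IsScalarTower K A V] [Module.Finite A V]
    [FaithfulSMul A V] [Nontrivial V]
    (h : ∀ I : Ideal A, I • (⊤ : Submodule A V) = ⊥ ∨ I • (⊤ : Submodule A V) = ⊤) :
    Module.Finite K V := by
  have := Module.nontrivial A V
  let := (isField_of_ideal_smul_top_eq_bot_or_top h).toField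
  have := finite_of_finite_type_of_isJacobsonRing K A
  exact Module.Finite.trans A V

end FaithfulModule

theorem List.exists_lt_count_of_card_mul_lt_length {α : Type*} [Fintype α] [DecidableEq α]
    {l : List α} {n : ℕ} (h : Fintype.card α * n < l.length) : ∃ x, n < l.count x := by
  have hsum : ∑ _x : α, n < ∑ x : α, (l : Multiset α).count x := by
    rwa [Multiset.sum_count_eq_card fun _ _ => Finset.mem_univ _, Finset.sum_const,
      Finset.card_univ, smul_eq_mul]
  obtain ⟨x, -, hx⟩ := Finset.exists_lt_of_sum_lt hsum
  exact ⟨x, by simpa using hx⟩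

section SwapRule

variable {Q M : Type*} [Monoid M] {ρ : Q → M}

theorem mul_list_prod_map_eq [Shelf Q] (hρ : ∀ x y, ρ x * ρ y = ρ (x ◃ y) * ρ x) (x : Q)
    (l : List Q) : ρ x * (l.map ρ).prod = ((l.map (x ◃ ·)).map ρ).prod * ρ x := by
  induction l with
  | nil => simp
  | cons y l ih =>
    rw [List.map_cons, List.prod_cons, ← mul_assoc, hρ, mul_assoc, ih, List.map_cons,
      List.map_cons, List.prod_cons, mul_assoc]

theorem pow_mul_eq_mul_pow [Rack Q] (hρ : ∀ x y, ρ x * ρ y = ρ (x ◃ y) * ρ x) (x : Q) (k : ℕ)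
    (y : Q) : ρ x ^ k * ρ y = ρ ((Rack.act' x ^ k) y) * ρ x ^ k := by
  induction k generalizing y with
  | zero => simp
  | succ k ih =>
    rw [pow_succ, mul_assoc, hρ, ← mul_assoc, ih, mul_assoc, pow_succ (Rack.act' x),
      Equiv.Perm.mul_apply, Rack.act'_apply]

theorem commute_pow_card_perm [Rack Q] [Finite Q] (hρ : ∀ x y, ρ x * ρ y = ρ (x ◃ y) * ρ x)
    (x y : Q) : Commute (ρ x ^ Nat.card (Equiv.Perm Q)) (ρ y) := by
  have := pow_mul_eq_mul_pow hρ x (Nat.card (Equiv.Perm Q)) y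
  rwa [pow_card_eq_one', Equiv.Perm.one_apply] at this

theorem exists_list_prod_eq_mul_pow_count [Shelf Q] [DecidableEq Q]
    (hρ : ∀ x y, ρ x * ρ y = ρ (x ◃ y) * ρ x) (x : Q) (l : List Q) :
    ∃ l' : List Q, l'.length + l.count x = l.length ∧
      (l.map ρ).prod = (l'.map ρ).prod * ρ x ^ l.count x := by
  induction l with
  | nil => exact ⟨[], rfl, by simp⟩
  | cons y l ih =>
    obtain ⟨l', hlen, hprod⟩ := ih
    by_cases hy : y = x
    · subst hy
      refine ⟨l'.map (y ◃ ·), ?_, ?_⟩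
      · simp only [List.length_map, List.count_cons_self, List.length_cons]
        omega
      rw [List.map_cons, List.prod_cons, hprod, ← mul_assoc, mul_list_prod_map_eq hρ,
        List.count_cons_self, pow_succ', mul_assoc]
    · refine ⟨y :: l', ?_, ?_⟩
      · simp only [List.length_cons, List.count_cons_of_ne hy]
        omega
      rw [List.count_cons_of_ne hy, List.map_cons, List.prod_cons, hprod, List.map_cons,
        List.prod_cons, mul_assoc]

theorem exists_list_prod_eq_mul_list_prod_of_length_le [Rack Q] [Finite Q]
    (hρ : ∀ x y, ρ x * ρ y = ρ (x ◃ y) * ρ x) (l : List Q) :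
    ∃ z ∈ Submonoid.closure (Set.range fun x => ρ x ^ Nat.card (Equiv.Perm Q)),
      ∃ l' : List Q, l'.length ≤ Nat.card Q * (Nat.card (Equiv.Perm Q) - 1) ∧
        (l.map ρ).prod = z * (l'.map ρ).prod := by
  classical
  have := Fintype.ofFinite Q
  set m := Nat.card (Equiv.Perm Q)
  have hm : 0 < m := Nat.card_pos
  induction hn : l.length using Nat.strong_induction_on generalizing l with
  | _ n ih =>
  by_cases hl : l.length ≤ Nat.card Q * (m - 1)
  · exact ⟨1, one_mem _, l, hl, (one_mul _).symm⟩
  obtain ⟨x, hx⟩ := l.exists_lt_count_of_card_mul_lt_length (n := m - 1)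
    (by rw [← Nat.card_eq_fintype_card]; omega)
  obtain ⟨l', hlen, hprod⟩ := exists_list_prod_eq_mul_pow_count hρ x l
  set l'' := l' ++ List.replicate (l.count x - m) x
  obtain ⟨z, hz, l₀, hl₀, hprod₀⟩ :=
    ih l''.length (by simp only [l'', List.length_append, List.length_replicate]; omega) l'' rfl
  refine ⟨ρ x ^ m * z, mul_mem (Submonoid.subset_closure ⟨x, rfl⟩) hz, l₀, hl₀, ?_⟩
  have hcomm : Commute (ρ x ^ m) (l''.map ρ).prod := Commute.list_prod_right _ _ fun _ h => by
    obtain ⟨y, -, rfl⟩ := List.mem_map.mp h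
    exact commute_pow_card_perm hρ x y
  calc (l.map ρ).prod = (l'.map ρ).prod * ρ x ^ (l.count x - m) * ρ x ^ m := by
        rw [hprod, mul_assoc, ← pow_add, Nat.sub_add_cancel (by omega)]
    _ = ρ x ^ m * (l''.map ρ).prod := by
        rw [hcomm.eq]
        simp only [l'', List.map_append, List.prod_append, List.map_replicate,
          List.prod_replicate]
    _ = ρ x ^ m * z * (l₀.map ρ).prod := by rw [hprod₀, mul_assoc]

end SwapRule

section LinearRep

variable {Q K V : Type*} [Field K] [AddCommGroup V] [Module K V] {ρ : Q → Module.End K V}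

theorem span_range_list_prod_apply_eq_top
    (hirr : ∀ W : Submodule K V, (∀ x, ∀ v ∈ W, ρ x v ∈ W) → W = ⊥ ∨ W = ⊤)
    {v : V} (hv : v ≠ 0) :
    Submodule.span K (Set.range fun l : List Q => (l.map ρ).prod v) = ⊤ := by
  set W := Submodule.span K (Set.range fun l : List Q => (l.map ρ).prod v)
  refine (hirr W fun x w hw => ?_).resolve_left fun hbot => hv ?_
  · have hle : W ≤ W.comap (ρ x) := Submodule.span_le.mpr <| by
      rintro _ ⟨l, rfl⟩
      exact Submodule.subset_span ⟨x :: l, by simp [Module.End.mul_apply]⟩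
    exact hle hw
  · rw [← Submodule.mem_bot K, ← hbot]
    exact Submodule.subset_span ⟨[], by simp⟩

theorem ideal_smul_top_eq_bot_or_top {A : Subalgebra K (Module.End K V)}
    (hA : A ≤ Subalgebra.centralizer K (Set.range ρ))
    (hirr : ∀ W : Submodule K V, (∀ x, ∀ v ∈ W, ρ x v ∈ W) → W = ⊥ ∨ W = ⊤) (I : Ideal A) :
    I • (⊤ : Submodule A V) = ⊥ ∨ I • (⊤ : Submodule A V) = ⊤ := by
  refine (hirr ((I • (⊤ : Submodule A V)).restrictScalars K) fun x w hw => ?_).imp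
    (Submodule.restrictScalars_eq_bot_iff K A V).mp (Submodule.restrictScalars_eq_top_iff K A V).mp
  rw [Submodule.restrictScalars_mem] at hw ⊢
  refine Submodule.smul_induction_on hw (fun a ha u _ => ?_) fun u u' hu hu' => ?_
  · have hax : ρ x * a = a * ρ x := hA a.2 (ρ x) ⟨x, rfl⟩
    rw [show ρ x (a • u) = a • ρ x u from LinearMap.congr_fun hax u]
    exact Submodule.smul_mem_smul ha Submodule.mem_top
  · rw [map_add]
    exact add_mem hu hu'

theorem Module.finite_adjoin_pow_card_perm [Rack Q] [Finite Q] [Nontrivial V]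
    (hρ : ∀ x y, ρ x * ρ y = ρ (x ◃ y) * ρ x)
    (hirr : ∀ W : Submodule K V, (∀ x, ∀ v ∈ W, ρ x v ∈ W) → W = ⊥ ∨ W = ⊤) :
    Module.Finite (Algebra.adjoin K (Set.range fun x => ρ x ^ Nat.card (Equiv.Perm Q))) V := by
  set A := Algebra.adjoin K (Set.range fun x => ρ x ^ Nat.card (Equiv.Perm Q))
  obtain ⟨v, hv⟩ := exists_ne (0 : V)
  set G := (fun l : List Q => (l.map ρ).prod v) ''
    {l | l.length ≤ Nat.card Q * (Nat.card (Equiv.Perm Q) - 1)}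
  have hwords : Submodule.span K (Set.range fun l : List Q => (l.map ρ).prod v) ≤
      (Submodule.span A G).restrictScalars K := by
    refine Submodule.span_le.mpr ?_
    rintro _ ⟨l, rfl⟩
    obtain ⟨z, hz, l', hl', hprod⟩ := exists_list_prod_eq_mul_list_prod_of_length_le hρ l
    have hzA : z ∈ A := Submonoid.closure_le.mpr Algebra.subset_adjoin hz
    simp only [SetLike.mem_coe, hprod, Module.End.mul_apply]
    exact Submodule.smul_mem _ (⟨z, hzA⟩ : A) (Submodule.subset_span (Set.mem_image_of_mem _ hl'))
  rw [span_range_list_prod_apply_eq_top hirr hv, top_le_iff,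
    Submodule.restrictScalars_eq_top_iff] at hwords
  exact ⟨Submodule.fg_def.mpr ⟨G, (List.finite_length_le Q _).image _, hwords⟩⟩

open scoped IsMulCommutative in
theorem Module.finite_of_irreducible_of_mul_eq [Rack Q] [Finite Q]
    (hρ : ∀ x y, ρ x * ρ y = ρ (x ◃ y) * ρ x)
    (hirr : ∀ W : Submodule K V, (∀ x, ∀ v ∈ W, ρ x v ∈ W) → W = ⊥ ∨ W = ⊤) :
    Module.Finite K V := by
  rcases subsingleton_or_nontrivial V with hV | hV
  · infer_instance
  set S := Set.range fun x => ρ x ^ Nat.card (Equiv.Perm Q)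
  have hcomm : ∀ a ∈ S, ∀ b ∈ S, a * b = b * a := by
    rintro _ ⟨x, rfl⟩ _ ⟨y, rfl⟩
    exact ((commute_pow_card_perm hρ x y).pow_right _).eq
  have hcent : Algebra.adjoin K S ≤ Subalgebra.centralizer K (Set.range ρ) :=
    Algebra.adjoin_le <| by
      rintro _ ⟨x, rfl⟩ _ ⟨y, rfl⟩
      exact (commute_pow_card_perm hρ x y).symm.eq
  have := Algebra.isMulCommutative_adjoin K hcomm
  have : Algebra.FiniteType K (Algebra.adjoin K S) :=
    (Subalgebra.fg_iff_finiteType _).mp ⟨S.toFinite.toFinset, by rw [Set.Finite.coe_toFinset]⟩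
  have := Module.finite_adjoin_pow_card_perm hρ hirr
  exact Module.finite_of_ideal_smul_top_eq_bot_or_top K (ideal_smul_top_eq_bot_or_top hcent hirr)

end LinearRep

/-- every irreducible representation over `ℂ` of a finite quandle is
finite dimensional. -/
theorem stmt2 (Q : Type*) [Quandle Q] [Finite Q] (V : Type*) [AddCommGroup V] [Module ℂ V]
    (ρ : Q → (V →ₗ[ℂ] V)ˣ) (hρ : IsQdlRep ρ) (hirr : QdlIrred ρ) :
    FiniteDimensional ℂ V :=
  Module.finite_of_irreducible_of_mul_eq (ρ := fun x => (ρ x : Module.End ℂ V))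
    (fun x y => by rw [← Units.val_mul, ← Units.val_mul, hρ, inv_mul_cancel_right]) hirr
end

section
/- For every quandle Q, the kernel Z₀ of the group morphism θ_{G(Q)} : G(Q) → Inn(Q) is contained in the center of G(Q). -/
open scoped Quandles
/-
Conjugating a generator `x` of `G(Q)` by `g` gives the generator `θ(g) x`: both sides are
multiplicative in `g` and agree on generators. Hence an element acting trivially on `Q` commutes
with every generator, and so with all of `G(Q)`.
-/

namespace Rack.EnvelGroup

variable {R : Type*} [Rack R]

theorem hom_ext {G : Type*} [Group G] {F₁ F₂ : EnvelGroup R →* G}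
    (h : ∀ x, F₁ (toEnvelGroup R x) = F₂ (toEnvelGroup R x)) : F₁ = F₂ := by
  rw [toEnvelGroup.univ_uniq R G _ F₁ rfl, toEnvelGroup.univ_uniq R G _ F₂ rfl]
  congr 1
  exact ShelfHom.ext (funext h)

theorem closure_range_toEnvelGroup : Subgroup.closure (Set.range (toEnvelGroup R)) = ⊤ := by
  set H := Subgroup.closure (Set.range (toEnvelGroup R))
  let ψ : R →◃ Quandle.Conj H :=
    { toFun := fun x => ⟨toEnvelGroup R x, Subgroup.subset_closure ⟨x, rfl⟩⟩
      map_act' := Subtype.ext (toEnvelGroup R).map_act' }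
  have hψ : H.subtype.comp (toEnvelGroup.map ψ) = MonoidHom.id _ := hom_ext fun _ => rfl
  refine eq_top_iff.mpr fun g _ => ?_
  rw [← MonoidHom.id_apply (EnvelGroup R) g, ← hψ]
  exact (toEnvelGroup.map ψ g).2

theorem mul_toEnvelGroup_mul_inv (g : EnvelGroup R) (x : R) :
    g * toEnvelGroup R x * g⁻¹ = toEnvelGroup R (envelAction g x) := by
  have hg : g ∈ Subgroup.closure (Set.range (toEnvelGroup R)) := by
    rw [closure_range_toEnvelGroup]; trivial
  induction hg using Subgroup.closure_induction generalizing x with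
  | mem _ hy =>
    obtain ⟨y, rfl⟩ := hy
    rw [envelAction_prop, (toEnvelGroup R).map_act, Quandle.conj_act_eq_conj]
  | one => simp
  | mul g h _ _ ihg ihh =>
    rw [map_mul, Equiv.Perm.mul_apply, ← ihg, ← ihh]
    group
  | inv g _ ih =>
    have hx := ih ((envelAction g)⁻¹ x)
    rw [Equiv.Perm.inv_def, Equiv.apply_symm_apply] at hx
    rw [map_inv, Equiv.Perm.inv_def, ← hx]
    group

theorem ker_envelAction_le_center : (envelAction (R := R)).ker ≤ Subgroup.center (EnvelGroup R) := by
  intro g hg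
  have hcomm : g ∈ Subgroup.centralizer (Set.range (toEnvelGroup R)) := by
    rintro _ ⟨x, rfl⟩
    have hx := mul_toEnvelGroup_mul_inv g x
    rw [MonoidHom.mem_ker.mp hg] at hx
    exact (mul_inv_eq_iff_eq_mul.mp hx).symm
  rwa [← Subgroup.centralizer_closure, closure_range_toEnvelGroup, Subgroup.coe_top,
    Subgroup.centralizer_univ] at hcomm

end Rack.EnvelGroup

theorem subtype_comp_QdlThetaG (Q : Type*) [Rack Q] :
    (QdlInn Q).subtype.comp (QdlThetaG Q) = Rack.envelAction :=
  Rack.EnvelGroup.hom_ext fun _ => rfl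

/-- the kernel `Z₀` of `θ_{G(Q)} : G(Q) → Inn(Q)` is contained in the
center of `G(Q)`. -/
theorem stmt3 (Q : Type*) [Quandle Q] :
    QdlZ0 Q ≤ Subgroup.center (Rack.EnvelGroup Q) := by
  rw [QdlZ0, ← MonoidHom.ker_comp_of_injective _ _ (QdlInn Q).subtype_injective,
    subtype_comp_QdlThetaG]
  exact Rack.EnvelGroup.ker_envelAction_le_center
end

section
/- For every group G, with Q = Conj(G), the canonical quandle morphism φ_Q : Conj(G) → G(Q) is injective, and the kernel Z₀ of θ_{G(Q)} : G(Q) → Inn(Q) is equal to the center of G(Q). -/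
/-! Conjugation in the enveloping group covers the action on the rack: `g φ(x) g⁻¹ = φ(g • x)`.
As `φ(Q)` generates `G(Q)`, an element `g` is central iff `φ(g • x) = φ(x)` for all `x`, which
for injective `φ` says that `g` acts trivially, i.e. `g ∈ Z₀`. For `Q = Conj G`, `φ` is injective
because the identity of `Conj G` factors through it. -/

open scoped Quandles
namespace Rack

variable {R : Type*} [Rack R]

theorem closure_range_toEnvelGroup : Subgroup.closure (Set.range (toEnvelGroup R)) = ⊤ := by
  refine eq_top_iff.mpr fun g _ => Quotient.inductionOn g fun a => ?_
  induction a with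
  | unit => exact Subgroup.one_mem _
  | incl x => exact Subgroup.subset_closure ⟨x, rfl⟩
  | mul a b ha hb => exact Subgroup.mul_mem _ ha hb
  | inv a ha => exact Subgroup.inv_mem _ ha

theorem mem_center_envelGroup_iff {g : EnvelGroup R} :
    g ∈ Subgroup.center (EnvelGroup R) ↔ ∀ x : R, Commute g (toEnvelGroup R x) := by
  rw [← Subgroup.centralizer_univ, ← Subgroup.coe_top, ← closure_range_toEnvelGroup,
    Subgroup.centralizer_closure, Subgroup.mem_centralizer_iff, Set.forall_mem_range]
  exact forall_congr' fun x => eq_comm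

theorem conj_toEnvelGroup (g : EnvelGroup R) (x : R) :
    g * toEnvelGroup R x * g⁻¹ = toEnvelGroup R (envelAction g x) := by
  have hg : g ∈ Subgroup.closure (Set.range (toEnvelGroup R)) := by
    rw [closure_range_toEnvelGroup]; exact Subgroup.mem_top g
  induction hg using Subgroup.closure_induction generalizing x with
  | mem _ hy =>
    obtain ⟨y, rfl⟩ := hy
    rw [envelAction_prop, ShelfHom.map_act, Quandle.conj_act_eq_conj]
  | one => simp
  | mul a b _ _ ha hb =>
    rw [map_mul, Equiv.Perm.mul_apply, ← ha, ← hb, mul_inv_rev]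
    group
  | inv a _ ha =>
    have hx := ha ((envelAction a)⁻¹ x)
    rw [Equiv.Perm.inv_def, Equiv.apply_symm_apply] at hx
    rw [map_inv, Equiv.Perm.inv_def, ← hx]
    group

theorem toEnvelGroup_injective_of_injective {G : Type*} [Group G] (f : R →◃ Quandle.Conj G)
    (hf : Function.Injective f) : Function.Injective (toEnvelGroup R) := by
  intro a b hab
  apply hf
  rw [← toEnvelGroup.univ R G f]
  exact congrArg (toEnvelGroup.map f) hab

theorem ker_envelAction_eq_center (h : Function.Injective (toEnvelGroup R)) :
    (envelAction (R := R)).ker = Subgroup.center (EnvelGroup R) := by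
  ext g
  rw [MonoidHom.mem_ker, mem_center_envelGroup_iff, Equiv.Perm.ext_iff]
  refine forall_congr' fun x => ?_
  rw [Commute, SemiconjBy, ← mul_inv_eq_iff_eq_mul, conj_toEnvelGroup, h.eq_iff]
  rfl

end Rack

theorem QdlZ0_eq_ker_envelAction (Q : Type*) [Rack Q] :
    QdlZ0 Q = (Rack.envelAction (R := Q)).ker := by
  have hθ : (QdlInn Q).subtype.comp (QdlThetaG Q) = Rack.envelAction :=
    Rack.toEnvelGroup.univ_uniq Q _ (Rack.toConj Q) _ rfl
  rw [QdlZ0, ← hθ, MonoidHom.ker_comp_of_injective _ _ Subtype.val_injective]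

/-- for `Q = Conj(G)`, the canonical map `φ_Q : Conj(G) → G(Q)` is injective
and `Z₀ = ker θ_{G(Q)}` equals the center of `G(Q)`. -/
theorem stmt4 (G : Type*) [Group G] :
    Function.Injective (Rack.toEnvelGroup (Quandle.Conj G)) ∧
      QdlZ0 (Quandle.Conj G) = Subgroup.center (Rack.EnvelGroup (Quandle.Conj G)) := by
  have hinj :=
    Rack.toEnvelGroup_injective_of_injective (ShelfHom.id (Quandle.Conj G)) Function.injective_id
  exact ⟨hinj, (QdlZ0_eq_ker_envelAction _).trans (Rack.ker_envelAction_eq_center hinj)⟩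
end

section
/- Let Q be a finite quandle such that every ℂˣ-valued 2-cocycle on Inn(Q) (trivial action) is a 2-coboundary. Then a representation ρ : Q → GL(V) of Q over ℂ is irreducible if and only if there exist an irreducible group representation ρ' : Inn(Q) → GL(V) and a character χ of Q such that ρ(x) = χ(x) ρ'(L_x) for all x ∈ Q. -/
open scoped Quandles
/-!
Extend `ρ` to a representation `φ` of the enveloping group `G(Q)`. Since
`φ(w) ρ(y) φ(w)⁻¹ = ρ(w • y)`, every element of the kernel `Z₀` of `G(Q) → Inn(Q)` acts by an
operator commuting with all `ρ(y)`, hence by a scalar. Schur's lemma holds here without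
finite-dimensionality: an irreducible representation of a countable quandle has countable
dimension, while for an endomorphism `f` with empty spectrum the vectors `(f - μ)⁻¹ v`, `μ ∈ ℂ`,
are linearly independent. So `φ` induces a projective representation of `Inn(Q)`, whose
`ℂˣ`-valued 2-cocycle is a coboundary by hypothesis; rescaling by it gives a linear representation
`ρ'` of `Inn(Q)` with `ρ(x) = χ(x) ρ'(L_x)`, and `ρ(x ◃ y) ρ(x) = ρ(x) ρ(y)` forces `χ` to be a
character. Irreducibility passes between `ρ` and `ρ'` because the `L_x` generate the finite group
`Inn(Q)`, in which every submonoid is a subgroup.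
-/

section Dixmier

open Polynomial

theorem spectrum.isUnit_aeval_of_eq_empty {𝕜 A : Type*} [Field 𝕜] [IsAlgClosed 𝕜] [Ring A]
    [Algebra 𝕜 A] {a : A} (ha : spectrum 𝕜 a = ∅) {p : 𝕜[X]} (hp : p ≠ 0) :
    IsUnit (aeval a p) := by
  rcases le_or_gt p.degree 0 with hdeg | hdeg
  · rw [eq_C_of_degree_le_zero hdeg] at hp ⊢
    rw [aeval_C]
    exact (Ne.isUnit fun h => hp (by rw [h, C_0])).map (algebraMap 𝕜 A)
  · rw [← spectrum.zero_notMem_iff 𝕜, spectrum.map_polynomial_aeval_of_degree_pos a p hdeg, ha,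
      Set.image_empty]
    exact Set.notMem_empty 0

theorem Module.End.linearIndependent_of_sub_algebraMap_apply_eq {K V : Type*} [Field K]
    [AddCommGroup V] [Module K V] {f : Module.End K V}
    (hf : ∀ p : K[X], p ≠ 0 → Function.Injective (aeval f p)) {v : V} (hv : v ≠ 0)
    {w : K → V} (hw : ∀ μ, (f - algebraMap K _ μ) (w μ) = v) : LinearIndependent K w := by
  classical
  refine linearIndependent_iff'.2 fun s m hm i hi => ?_
  set q : K[X] := ∑ μ ∈ s, C (m μ) * Lagrange.nodal (s.erase μ) id
  have hqv : aeval f q v = 0 := by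
    rw [← map_zero (aeval f (Lagrange.nodal s id)), ← hm, map_sum, map_sum, LinearMap.sum_apply]
    refine Finset.sum_congr rfl fun μ hμ => ?_
    have hX : aeval f (X - C μ) = f - algebraMap K _ μ := by simp
    rw [Lagrange.nodal_eq_mul_nodal_erase hμ, mul_comm (X - C _), map_mul, map_mul, id, hX]
    simp only [Module.End.mul_apply, map_smul, hw, aeval_C, Module.algebraMap_end_apply]
  have hq : q = 0 := by
    by_contra hq
    exact hv (hf q hq (by rw [hqv, map_zero]))
  have hqi : eval i q = m i * eval i (Lagrange.nodal (s.erase i) id) := by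
    rw [eval_finsetSum, Finset.sum_eq_single i]
    · rw [eval_mul, eval_C]
    · intro μ hμ hμi
      have : eval i (Lagrange.nodal (s.erase μ) id) = 0 :=
        Lagrange.eval_nodal_at_node (v := id) (Finset.mem_erase.2 ⟨Ne.symm hμi, hi⟩)
      rw [eval_mul, this, mul_zero]
    · exact fun h => (h hi).elim
  rw [hq, eval_zero, eq_comm] at hqi
  exact (mul_eq_zero.1 hqi).resolve_right
    (Lagrange.eval_nodal_not_at_node fun j hj => (Finset.ne_of_mem_erase hj).symm)

theorem Module.End.spectrum_nonempty_of_rank_le_aleph0 {V : Type*} [AddCommGroup V] [Module ℂ V]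
    [Nontrivial V] (hV : Module.rank ℂ V ≤ Cardinal.aleph0) (f : Module.End ℂ V) :
    (spectrum ℂ f).Nonempty := by
  rw [Set.nonempty_iff_ne_empty]
  intro hf
  obtain ⟨v, hv⟩ := exists_ne (0 : V)
  have hbij : ∀ p : ℂ[X], p ≠ 0 → Function.Bijective (aeval f p) := fun p hp =>
    (Module.End.isUnit_iff _).1 (spectrum.isUnit_aeval_of_eq_empty hf hp)
  choose w hw using fun μ => (hbij (X - C μ) (X_sub_C_ne_zero μ)).2 v
  have hli := Module.End.linearIndependent_of_sub_algebraMap_apply_eq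
    (fun p hp => (hbij p hp).1) hv (w := w) (by simpa using hw)
  have hcard : Cardinal.lift (Cardinal.mk ℂ) ≤ Cardinal.aleph0 :=
    hli.cardinal_lift_le_rank.trans (Cardinal.lift_le_aleph0.2 hV)
  rw [Cardinal.lift_le_aleph0, Cardinal.mk_complex] at hcard
  exact hcard.not_gt Cardinal.aleph0_lt_continuum

end Dixmier

section Scalars

variable (V : Type*) [AddCommGroup V] [Module ℂ V]

def scalarUnits : ℂˣ →* (V →ₗ[ℂ] V)ˣ :=
  Units.map (algebraMap ℂ (V →ₗ[ℂ] V)).toMonoidHom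

variable {V}

theorem scalarUnits_injective [Nontrivial V] : Function.Injective (scalarUnits V) :=
  Units.map_injective (algebraMap ℂ (V →ₗ[ℂ] V)).injective

theorem commute_scalarUnits (c : ℂˣ) (u : (V →ₗ[ℂ] V)ˣ) : Commute (scalarUnits V c) u :=
  Units.ext (Algebra.commutes _ _)

end Scalars

namespace QdlIrred

variable {Q V : Type*} [AddCommGroup V] [Module ℂ V] {ρ : Q → (V →ₗ[ℂ] V)ˣ}

theorem rank_le_aleph0 [Countable Q] (hρ : QdlIrred ρ) : Module.rank ℂ V ≤ Cardinal.aleph0 := by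
  nontriviality V
  obtain ⟨v, hv⟩ := exists_ne (0 : V)
  set words : List Q → V := fun l => (l.map fun x => (ρ x : V →ₗ[ℂ] V)).prod v
  have hinv : ∀ x, ∀ u ∈ Submodule.span ℂ (Set.range words),
      (ρ x : V →ₗ[ℂ] V) u ∈ Submodule.span ℂ (Set.range words) := by
    intro x u hu
    refine (Submodule.map_span_le _ _ _).2 ?_ (Submodule.mem_map_of_mem hu)
    rintro _ ⟨l, rfl⟩
    exact Submodule.subset_span ⟨x :: l, by simp [words, Module.End.mul_apply]⟩
  have htop : Submodule.span ℂ (Set.range words) = ⊤ :=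
    (hρ _ hinv).resolve_left fun h => hv <| by
      simpa [h, words] using Submodule.subset_span (R := ℂ) (s := Set.range words) ⟨[], rfl⟩
  rw [← rank_top, ← htop]
  exact (rank_span_le _).trans (Set.countable_range words).le_aleph0

theorem eq_algebraMap_of_commute [Countable Q] [Nontrivial V] (hρ : QdlIrred ρ)
    {f : V →ₗ[ℂ] V} (hf : ∀ x, Commute (ρ x : V →ₗ[ℂ] V) f) : ∃ c : ℂ, f = algebraMap ℂ _ c := by
  obtain ⟨c, hc⟩ := Module.End.spectrum_nonempty_of_rank_le_aleph0 hρ.rank_le_aleph0 f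
  refine ⟨c, ?_⟩
  set g := algebraMap ℂ (V →ₗ[ℂ] V) c - f
  have hg : ∀ x, Commute (ρ x : V →ₗ[ℂ] V) g := fun x =>
    (Algebra.commute_algebraMap_right c _).sub_right (hf x)
  have hker := hρ (LinearMap.ker g) fun x u hu => by
    rw [LinearMap.mem_ker, ← Module.End.mul_apply, ← (hg x).eq, Module.End.mul_apply,
      LinearMap.mem_ker.1 hu, map_zero]
  have hrange := hρ (LinearMap.range g) fun x u ⟨u', hu'⟩ =>
    ⟨(ρ x : V →ₗ[ℂ] V) u', by
      rw [← hu', ← Module.End.mul_apply, ← (hg x).eq, Module.End.mul_apply]⟩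
  suffices g = 0 from (sub_eq_zero.1 this).symm
  rcases hrange with hrange | hrange
  · exact LinearMap.range_eq_bot.1 hrange
  rcases hker with hker | hker
  · exact absurd ((Module.End.isUnit_iff g).2 ⟨LinearMap.ker_eq_bot.1 hker,
      LinearMap.range_eq_top.1 hrange⟩) (spectrum.mem_iff.1 hc)
  · exact LinearMap.ker_eq_top.1 hker

theorem mem_range_scalarUnits_of_commute [Countable Q] [Nontrivial V] (hρ : QdlIrred ρ)
    {u : (V →ₗ[ℂ] V)ˣ} (hu : ∀ x, Commute (ρ x) u) : u ∈ (scalarUnits V).range := by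
  obtain ⟨c, hc⟩ := hρ.eq_algebraMap_of_commute fun x => (hu x).units_val
  have hc0 : c ≠ 0 := by
    rintro rfl
    exact u.ne_zero (by rw [hc, map_zero])
  exact ⟨Units.mk0 c hc0, Units.ext hc.symm⟩

end QdlIrred

section CharacterTwist

variable {Q G V : Type*} [Group G] [AddCommGroup V] [Module ℂ V]

theorem apply_mem_of_closure_eq_top [Finite G] {S : Set G} (hS : Subgroup.closure S = ⊤)
    (ψ : G →* (V →ₗ[ℂ] V)ˣ) {W : Submodule ℂ V}
    (hW : ∀ s ∈ S, ∀ v ∈ W, (ψ s : V →ₗ[ℂ] V) v ∈ W) (g : G) :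
    ∀ v ∈ W, (ψ g : V →ₗ[ℂ] V) v ∈ W := by
  have hg : g ∈ Submonoid.closure S := by
    rw [← Subgroup.closure_toSubmonoid_of_finite, hS]
    exact Subgroup.mem_top g
  induction hg using Submonoid.closure_induction with
  | mem s hs => exact hW s hs
  | one => simp
  | mul a b _ _ ha hb => exact fun v hv => by simpa using ha _ (hb v hv)

theorem qdlIrred_iff_grpIrred [Finite G] {θ : Q → G} (hθ : Subgroup.closure (Set.range θ) = ⊤)
    {ρ : Q → (V →ₗ[ℂ] V)ˣ} {ψ : G →* (V →ₗ[ℂ] V)ˣ} {χ : Q → ℂˣ}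
    (h : ∀ x, (ρ x : V →ₗ[ℂ] V) = (χ x : ℂ) • (ψ (θ x) : V →ₗ[ℂ] V)) :
    QdlIrred ρ ↔ GrpIrred ψ := by
  have hinv : ∀ (W : Submodule ℂ V) x v,
      (ρ x : V →ₗ[ℂ] V) v ∈ W ↔ (ψ (θ x) : V →ₗ[ℂ] V) v ∈ W := fun W x v => by
    rw [h, LinearMap.smul_apply, W.smul_mem_iff (χ x).ne_zero]
  refine ⟨fun hρ W hW => hρ W fun x v hv => (hinv W x v).2 (hW _ v hv),
    fun hψ W hW => hψ W (apply_mem_of_closure_eq_top hθ ψ ?_)⟩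
  rintro _ ⟨x, rfl⟩ v hv
  exact (hinv W x v).1 (hW x v hv)

theorem qdlChar_of_eq_smul [Shelf Q] [Nontrivial V] (θ : Q →◃ Quandle.Conj G)
    {ρ : Q → (V →ₗ[ℂ] V)ˣ} (hρ : IsQdlRep ρ) (ψ : G →* (V →ₗ[ℂ] V)ˣ) {χ : Q → ℂˣ}
    (h : ∀ x, (ρ x : V →ₗ[ℂ] V) = (χ x : ℂ) • (ψ (θ x) : V →ₗ[ℂ] V)) : QdlChar χ := by
  intro x y
  have hρxy : ρ (x ◃ y) * ρ x = ρ x * ρ y := by rw [hρ]; group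
  have hθxy : θ (x ◃ y) * θ x = θ x * θ y := by
    rw [θ.map_act, Quandle.conj_act_eq_conj]; group
  have key : ((χ (x ◃ y) : ℂ) * χ x) • (ψ (θ x * θ y) : V →ₗ[ℂ] V)
      = ((χ x : ℂ) * χ y) • (ψ (θ x * θ y) : V →ₗ[ℂ] V) := by
    have := congrArg Units.val hρxy
    simp only [Units.val_mul, h, smul_mul_smul_comm] at this
    rwa [← Units.val_mul (ψ _), ← Units.val_mul (ψ _), ← map_mul ψ, ← map_mul ψ, hθxy] at this
  have := smul_left_injective ℂ (Units.ne_zero _) key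
  rw [mul_comm (χ x : ℂ)] at this
  exact Units.val_injective (mul_right_cancel₀ (χ x).ne_zero this)

end CharacterTwist

theorem MonoidHom.exists_lift_of_forall_cocycle_eq_coboundary
    {E G H A : Type*} [Group E] [Group G] [Group H] [CommGroup A]
    {π : E →* G} (hπ : Function.Surjective π) (φ : E →* H) {σ : A →* H}
    (hσ : Function.Injective σ) (hσc : ∀ a h, Commute (σ a) h)
    (hker : ∀ e, π e = 1 → φ e ∈ σ.range)
    (hcob : ∀ α : G → G → A, (∀ g h k, α g h * α (g * h) k = α h k * α g (h * k)) →
      ∃ β : G → A, ∀ g h, α g h = β g * β h * (β (g * h))⁻¹) :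
    ∃ ψ : G →* H, ∀ e, ∃ a, φ e = σ a * ψ (π e) := by
  choose s hs using hπ
  choose α hα using fun g h => hker (s g * s h * (s (g * h))⁻¹) (by simp [hs])
  simp only [map_mul, map_inv] at hα
  have hcoc : ∀ g h k, α g h * α (g * h) k = α h k * α g (h * k) := fun g h k => hσ <| by
    calc σ (α g h * α (g * h) k)
        = φ (s g) * (σ (α h k) * φ (s (h * k))) * (φ (s (g * h * k)))⁻¹ := by
          simp only [map_mul, hα]; group
      _ = σ (α h k * α g (h * k)) := by
          rw [← mul_assoc, ← (hσc _ _).eq, map_mul, hα g (h * k), mul_assoc g h k]; group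
  obtain ⟨β, hβ⟩ := hcob α hcoc
  refine ⟨MonoidHom.mk' (fun g => σ (β g)⁻¹ * φ (s g)) fun g h => ?_, fun e => ?_⟩
  · have hαβ : (β g)⁻¹ * (β h)⁻¹ * α g h = (β (g * h))⁻¹ := by
      rw [hβ, ← mul_inv, inv_mul_cancel_left]
    rw [(hσc _ _).symm.mul_mul_mul_comm, ← map_mul, ← hαβ, map_mul, mul_assoc, hα]
    group
  · obtain ⟨a, ha⟩ := hker (e * (s (π e))⁻¹) (by simp [hs])
    refine ⟨a * β (π e), ?_⟩
    rw [MonoidHom.mk'_apply, ← mul_assoc, ← map_mul, mul_inv_cancel_right, ha, map_mul, map_inv,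
      inv_mul_cancel_right]

namespace Rack

variable {R : Type*} [Rack R]

theorem EnvelGroup.induction {p : EnvelGroup R → Prop} (one : p 1)
    (of : ∀ x, p (toEnvelGroup R x)) (mul : ∀ a b, p a → p b → p (a * b))
    (inv : ∀ a, p a → p a⁻¹) (w : EnvelGroup R) : p w := by
  induction w using Quotient.ind with | _ a => ?_
  induction a with
  | unit => exact one
  | incl x => exact of x
  | mul a b ha hb => exact mul _ _ ha hb
  | inv a ha => exact inv _ ha

theorem toEnvelGroup.map_toEnvelGroup {G : Type*} [Group G] (f : R →◃ Quandle.Conj G) (x : R) :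
    toEnvelGroup.map f (toEnvelGroup R x) = f x := rfl

theorem toEnvelGroup.map_mul_mul_inv {G : Type*} [Group G] (f : R →◃ Quandle.Conj G)
    (w : EnvelGroup R) (y : R) :
    toEnvelGroup.map f w * f y * (toEnvelGroup.map f w)⁻¹ = f (envelAction w y) := by
  induction w using EnvelGroup.induction generalizing y with
  | one => simp
  | of x => rw [map_toEnvelGroup, envelAction_prop, f.map_act, Quandle.conj_act_eq_conj]
  | mul a b ha hb =>
    rw [map_mul, map_mul, Equiv.Perm.mul_apply, ← ha, ← hb]; group
  | inv a ha =>
    have := ha ((envelAction a)⁻¹ y)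
    rw [Equiv.Perm.coe_inv, Equiv.apply_symm_apply] at this
    rw [map_inv, map_inv, Equiv.Perm.coe_inv, ← this]
    group

end Rack

open Rack

section Inn

variable {Q : Type*} [Rack Q]

theorem coe_qdlThetaG_apply (w : EnvelGroup Q) :
    (QdlThetaG Q w : Equiv.Perm Q) = envelAction w := by
  induction w using EnvelGroup.induction with
  | one => simp
  | of x => rfl
  | mul a b ha hb => simp [ha, hb]
  | inv a ha => simp [ha]

theorem closure_range_qdlTheta :
    Subgroup.closure (@Set.range (QdlInn Q) Q (QdlTheta Q)) = ⊤ := by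
  have : @Set.range (QdlInn Q) Q (QdlTheta Q) = Subtype.val ⁻¹' Set.range (act' (R := Q)) := by
    ext g
    exact ⟨fun ⟨x, hx⟩ => ⟨x, congrArg Subtype.val hx⟩, fun ⟨x, hx⟩ => ⟨x, Subtype.ext hx⟩⟩
  rw [this]
  exact Subgroup.closure_closure_coe_preimage

theorem qdlThetaG_surjective : Function.Surjective (QdlThetaG Q) := by
  rw [← MonoidHom.range_eq_top, eq_top_iff, ← closure_range_qdlTheta, Subgroup.closure_le]
  rintro _ ⟨x, rfl⟩
  exact ⟨toEnvelGroup Q x, rfl⟩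

end Inn

def IsQdlRep.toShelfHom {Q V : Type*} [Shelf Q] [AddCommGroup V] [Module ℂ V]
    {ρ : Q → (V →ₗ[ℂ] V)ˣ} (hρ : IsQdlRep ρ) : Q →◃ Quandle.Conj (V →ₗ[ℂ] V)ˣ where
  toFun := ρ
  map_act' := hρ _ _

theorem QdlIrred.toEnvelGroup_map_mem_range_scalarUnits {Q V : Type*} [Rack Q] [Countable Q]
    [AddCommGroup V] [Module ℂ V] [Nontrivial V] {ρ : Q → (V →ₗ[ℂ] V)ˣ} (hirr : QdlIrred ρ)
    (hρ : IsQdlRep ρ) {w : EnvelGroup Q} (hw : envelAction w = 1) :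
    toEnvelGroup.map hρ.toShelfHom w ∈ (scalarUnits V).range :=
  hirr.mem_range_scalarUnits_of_commute fun y => by
    have := toEnvelGroup.map_mul_mul_inv hρ.toShelfHom w y
    rw [hw, Equiv.Perm.one_apply] at this
    exact (mul_inv_eq_iff_eq_mul.1 this : Commute _ _).symm

/-- if every `ℂˣ`-valued 2-cocycle on `Inn(Q)` is a 2-coboundary (`Q` finite),
then a quandle representation `ρ` of `Q` is irreducible iff `ρ = χ · (ρ' ∘ θ)` for some
irreducible linear representation `ρ'` of `Inn(Q)` and some character `χ` of `Q`. -/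
theorem stmt8 (Q : Type*) [Quandle Q] [Finite Q]
    (hschur : ∀ α : QdlInn Q → QdlInn Q → ℂˣ,
      (∀ g h k : QdlInn Q, α g h * α (g * h) k = α h k * α g (h * k)) →
      ∃ β : QdlInn Q → ℂˣ, ∀ g h : QdlInn Q, α g h = β g * β h * (β (g * h))⁻¹)
    (V : Type*) [AddCommGroup V] [Module ℂ V]
    (ρ : Q → (V →ₗ[ℂ] V)ˣ) (hρ : IsQdlRep ρ) :
    QdlIrred ρ ↔
      ∃ (ρ' : QdlInn Q →* (V →ₗ[ℂ] V)ˣ) (χ : Q → ℂˣ), GrpIrred ρ' ∧ QdlChar χ ∧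
        ∀ x : Q, (ρ x : V →ₗ[ℂ] V) = (χ x : ℂ) • (ρ' (QdlTheta Q x) : V →ₗ[ℂ] V) := by
  constructor
  · intro hirr
    rcases subsingleton_or_nontrivial V with hV | hV
    · exact ⟨1, 1, fun W _ => Or.inl (Subsingleton.elim _ _), fun _ _ => rfl,
        fun _ => Subsingleton.elim _ _⟩
    obtain ⟨ψ, hψ⟩ := MonoidHom.exists_lift_of_forall_cocycle_eq_coboundary qdlThetaG_surjective
      (toEnvelGroup.map hρ.toShelfHom) scalarUnits_injective commute_scalarUnits
      (fun w hw => hirr.toEnvelGroup_map_mem_range_scalarUnits hρ <| by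
        rw [← coe_qdlThetaG_apply, hw]; rfl) hschur
    choose χ hχ using fun x => hψ (toEnvelGroup Q x)
    have h : ∀ x, (ρ x : V →ₗ[ℂ] V) = (χ x : ℂ) • (ψ (QdlTheta Q x) : V →ₗ[ℂ] V) := fun x =>
      (congrArg Units.val (hχ x)).trans (Algebra.smul_def _ _).symm
    exact ⟨ψ, χ, (qdlIrred_iff_grpIrred closure_range_qdlTheta h).1 hirr,
      qdlChar_of_eq_smul (QdlTheta Q) hρ ψ h, h⟩
  · rintro ⟨ψ, χ, hψ, -, h⟩
    exact (qdlIrred_iff_grpIrred closure_range_qdlTheta h).2 hψ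
end

section
/- Let G and H be finite groups and θ : G → H a surjective group homomorphism such that ker θ is contained in both the center of G and the commutator subgroup of G, and such that for every ℂˣ-valued 2-cocycle α on H (trivial action) the pullback (g,g') ↦ α(θ(g), θ(g')) is a 2-coboundary on G (i.e. G is a Schur cover of H). Then a representation ρ : Conj(G) → GL(V) of the quandle Conj(G) over ℂ is irreducible if and only if there exist an irreducible group representation ρ' : G → GL(V) and a map χ : G → ℂˣ with χ(g h g⁻¹) = χ(h) for all g,h ∈ G, such that ρ(g) = χ(g) ρ'(g) for all g ∈ G. -/
open scoped Quandles
/-!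
Irreducibility forces every operator commuting with all `ρ x` to be a scalar (Dixmier's form of
Schur's lemma: `V` has countable dimension over the uncountable field `ℂ`). Since
`ρ g * ρ x * (ρ g)⁻¹ = ρ (g * x * g⁻¹)` and, `ker θ` being central, conjugation by `g` only
depends on `θ g`, each `ρ g` is determined up to a scalar by `θ g`. Along a section `s` of `θ`,
`h ↦ ρ (s h)` is therefore a projective representation of `H`; its 2-cocycle pulls back to a
coboundary `β` on `G`, and rescaling by `β` gives a linear representation `ρ'` with
`ρ = χ • ρ'`. Comparing both sides of `ρ (g * h * g⁻¹) = ρ g * ρ h * (ρ g)⁻¹` shows that `χ`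
is a class function, and rescaling by nonzero scalars does not change invariant subspaces.
-/

open Polynomial Cardinal

section Dixmier

variable {K V : Type*} [Field K] [AddCommGroup V] [Module K V]

theorem eq_zero_or_isUnit_of_commute {ι : Type*} (f : ι → Module.End K V)
    (hirr : ∀ W : Submodule K V, (∀ i, ∀ v ∈ W, f i v ∈ W) → W = ⊥ ∨ W = ⊤)
    (S : Module.End K V) (hS : ∀ i, Commute S (f i)) : S = 0 ∨ IsUnit S := by
  have hSf (i : ι) (v : V) : S (f i v) = f i (S v) := LinearMap.congr_fun (hS i) v
  rcases hirr (LinearMap.ker S) fun i v hv => by simp [hSf, LinearMap.mem_ker.mp hv] with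
    hker | hker
  · rcases hirr (LinearMap.range S) fun i v ⟨w, hw⟩ => ⟨f i w, hw ▸ hSf i w⟩ with hran | hran
    · exact Or.inl (LinearMap.range_eq_bot.mp hran)
    · exact Or.inr ((Module.End.isUnit_iff S).mpr
        ⟨LinearMap.ker_eq_bot.mp hker, LinearMap.range_eq_top.mp hran⟩)
  · exact Or.inl (LinearMap.ker_eq_top.mp hker)

theorem rank_le_aleph0_of_irreducible {ι : Type*} [Countable ι] [Nontrivial V]
    (f : ι → Module.End K V)
    (hirr : ∀ W : Submodule K V, (∀ i, ∀ v ∈ W, f i v ∈ W) → W = ⊥ ∨ W = ⊤) :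
    Module.rank K V ≤ ℵ₀ := by
  obtain ⟨v₀, hv₀⟩ := exists_ne (0 : V)
  set orbit := Set.range fun w : FreeMonoid ι => FreeMonoid.lift f w v₀
  have hspan : Submodule.span K orbit = ⊤ := by
    refine (hirr _ fun i v hv => ?_).resolve_left fun h => hv₀ ?_
    · induction hv using Submodule.span_induction with
      | mem w hw =>
        obtain ⟨w, rfl⟩ := hw
        exact Submodule.subset_span ⟨.of i * w, by simp [Module.End.mul_apply]⟩
      | zero => simp
      | add a b _ _ ha hb => simpa using add_mem ha hb
      | smul c a _ ha => simpa using Submodule.smul_mem _ c ha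
    · simpa [h] using Submodule.subset_span (R := K) ⟨1, by simp⟩ (s := orbit)
  calc Module.rank K V = Module.rank K (Submodule.span K orbit) := by rw [hspan, rank_top]
    _ ≤ #orbit := rank_span_le _
    _ ≤ ℵ₀ := (Set.countable_range _).le_aleph0

theorem isUnit_aeval_of_spectrum_eq_empty {A : Type*} [Ring A] [Algebra K A] [IsAlgClosed K]
    {a : A} (ha : spectrum K a = ∅) {p : K[X]} (hp : p ≠ 0) : IsUnit (aeval a p) := by
  rcases le_or_gt p.degree 0 with hdeg | hdeg
  · rw [eq_C_of_degree_le_zero hdeg, aeval_C]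
    exact (isUnit_iff_ne_zero.mpr fun h => hp (eq_C_of_degree_le_zero hdeg ▸ by simp [h])).map _
  · rw [← spectrum.zero_notMem_iff K, spectrum.map_polynomial_aeval_of_degree_pos a p hdeg, ha]
    simp

theorem spectrum_nonempty_of_rank_le_aleph0 [IsAlgClosed K] [Uncountable K] [Nontrivial V]
    (hV : Module.rank K V ≤ ℵ₀) (T : Module.End K V) : (spectrum K T).Nonempty := by
  by_contra hT
  rw [Set.not_nonempty_iff_eq_empty] at hT
  -- Every nonzero polynomial in `T` is invertible, so `K(X)` acts on `V` through `T`; the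
  -- uncountable independent family `(X - a)⁻¹` of `K(X)` would then embed into `V`.
  let evalUnits : nonZeroDivisors K[X] →* (Module.End K V)ˣ :=
    IsUnit.liftRight ((aeval T).toRingHom.toMonoidHom.comp (nonZeroDivisors K[X]).subtype)
      fun p => isUnit_aeval_of_spectrum_eq_empty hT (nonZeroDivisors.ne_zero p.2)
  let φ : FractionRing K[X] →+* Module.End K V :=
    OreLocalization.universalHom (aeval T).toRingHom evalUnits
      fun p => by simp [evalUnits, IsUnit.coe_liftRight]
  have hφ (c : K) : φ (algebraMap K _ c) = algebraMap K _ c := by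
    rw [IsScalarTower.algebraMap_apply K K[X] (FractionRing K[X])]
    exact (OreLocalization.universalHom_commutes _ _ _).trans (aeval_C T c)
  obtain ⟨v₀, hv₀⟩ := exists_ne (0 : V)
  let ψ : FractionRing K[X] →ₗ[K] V :=
    { toFun r := φ r v₀
      map_add' r s := by simp
      map_smul' c r := by simp [Algebra.smul_def, hφ, Module.End.mul_apply] }
  have hψ : LinearMap.ker ψ = ⊥ := by
    refine LinearMap.ker_eq_bot'.mpr fun r hr => by_contra fun hr0 => hv₀ ?_
    have hinj := (Module.End.isUnit_iff _).mp ((IsUnit.mk0 r hr0).map φ) |>.injective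
    exact hinj (hr.trans (map_zero _).symm)
  have hX : Transcendental K (algebraMap K[X] (FractionRing K[X]) X) :=
    (transcendental_algebraMap_iff (IsFractionRing.injective _ _)).mpr (transcendental_X K)
  have hcard := (hX.linearIndependent_sub_inv.map' ψ hψ).cardinal_lift_le_rank
  have hK : #K ≤ ℵ₀ := by simpa using hcard.trans (lift_le.mpr hV)
  exact hK.not_gt (aleph0_lt_mk_iff.mpr ‹_›)

theorem exists_eq_algebraMap_of_commute [IsAlgClosed K] [Uncountable K] {ι : Type*} [Countable ι]
    (f : ι → Module.End K V)
    (hirr : ∀ W : Submodule K V, (∀ i, ∀ v ∈ W, f i v ∈ W) → W = ⊥ ∨ W = ⊤)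
    (T : Module.End K V) (hT : ∀ i, Commute T (f i)) : ∃ c : K, T = algebraMap K _ c := by
  rcases subsingleton_or_nontrivial V with hV | hV
  · exact ⟨0, Subsingleton.elim _ _⟩
  obtain ⟨μ, hμ⟩ := spectrum_nonempty_of_rank_le_aleph0 (rank_le_aleph0_of_irreducible f hirr) T
  refine ⟨μ, (sub_eq_zero.mp ?_).symm⟩
  exact (eq_zero_or_isUnit_of_commute f hirr _ fun i =>
    (Algebra.commute_algebraMap_left μ (f i)).sub_left (hT i)).resolve_right hμ

end Dixmier

namespace Units

variable {G M : Type*} [Group G] [Monoid M] [MulAction G M] [SMulCommClass G M M]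
  [IsScalarTower G M M]

instance isScalarTower_self : IsScalarTower G Mˣ Mˣ :=
  ⟨fun g m n => Units.ext (smul_mul_assoc g (m : M) n)⟩

instance smulCommClass_self : SMulCommClass G Mˣ Mˣ :=
  ⟨fun g m n => Units.ext (mul_smul_comm g (m : M) n).symm⟩

end Units

section ScalarUnits

variable {V : Type*} [AddCommGroup V] [Module ℂ V]

theorem val_units_smul (c : ℂˣ) (u : (V →ₗ[ℂ] V)ˣ) :
    ((c • u : (V →ₗ[ℂ] V)ˣ) : V →ₗ[ℂ] V) = (c : ℂ) • (u : V →ₗ[ℂ] V) := by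
  rw [Units.val_smul, Units.smul_def]

theorem units_smul_left_injective [Nontrivial V] (u : (V →ₗ[ℂ] V)ˣ) :
    Function.Injective fun c : ℂˣ => c • u := by
  intro c c' h
  obtain ⟨v₀, hv₀⟩ := exists_ne (0 : V)
  have h1 : c • (1 : (V →ₗ[ℂ] V)ˣ) = c' • 1 := by
    simpa only [smul_mul_assoc, mul_inv_cancel] using congrArg (· * u⁻¹) h
  have h2 := congr(($(congrArg Units.val h1) : V →ₗ[ℂ] V) v₀)
  simp only [val_units_smul, Units.val_one, LinearMap.smul_apply, Module.End.one_apply] at h2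
  exact Units.ext (smul_left_injective ℂ hv₀ h2)

theorem qdlIrred_iff_of_forall_eq_smul {Q : Type*} {ρ σ : Q → (V →ₗ[ℂ] V)ˣ} (c : Q → ℂˣ)
    (h : ∀ x, (ρ x : V →ₗ[ℂ] V) = (c x : ℂ) • (σ x : V →ₗ[ℂ] V)) :
    QdlIrred ρ ↔ QdlIrred σ := by
  simp [QdlIrred, h]

theorem exists_smul_eq_of_conj_eq {ι : Type*} [Countable ι] [Nontrivial V]
    {ρ : ι → (V →ₗ[ℂ] V)ˣ} (hirr : QdlIrred ρ) {w₁ w₂ : (V →ₗ[ℂ] V)ˣ}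
    (h : ∀ x, w₁ * ρ x * w₁⁻¹ = w₂ * ρ x * w₂⁻¹) : ∃ c : ℂˣ, w₁ = c • w₂ := by
  have hcomm (x : ι) : Commute ((w₂⁻¹ * w₁ : (V →ₗ[ℂ] V)ˣ) : V →ₗ[ℂ] V) (ρ x) := by
    have : w₂⁻¹ * w₁ * ρ x = ρ x * (w₂⁻¹ * w₁) :=
      calc w₂⁻¹ * w₁ * ρ x = w₂⁻¹ * (w₁ * ρ x * w₁⁻¹) * w₁ := by group
        _ = ρ x * (w₂⁻¹ * w₁) := by rw [h]; group
    exact congrArg Units.val this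
  have : Uncountable ℂ := Complex.ofReal_injective.uncountable
  obtain ⟨c, hc⟩ := exists_eq_algebraMap_of_commute (fun x => (ρ x : V →ₗ[ℂ] V)) hirr _ hcomm
  have hc0 : c ≠ 0 := by
    rintro rfl
    exact (w₂⁻¹ * w₁).ne_zero (by simp at hc)
  refine ⟨Units.mk0 c hc0, Units.ext ?_⟩
  rw [val_units_smul, ← mul_inv_cancel_left w₂ w₁, Units.val_mul, hc]
  simp [Algebra.algebraMap_eq_smul_one]

end ScalarUnits

section ProjectiveRepresentation

variable {G H V : Type*} [Group G] [Group H] [AddCommGroup V] [Module ℂ V]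

theorem isTwoCocycle_of_mul_eq_smul [Nontrivial V] {P : H → (V →ₗ[ℂ] V)ˣ} {b : H → H → ℂˣ}
    (hP : ∀ h h', P h * P h' = b h h' • P (h * h')) (g h k : H) :
    b g h * b (g * h) k = b h k * b g (h * k) := by
  apply units_smul_left_injective (P (g * h * k))
  calc (b g h * b (g * h) k) • P (g * h * k) = P g * P h * P k := by
        rw [hP, smul_mul_assoc, hP, smul_smul]
    _ = (b h k * b g (h * k)) • P (g * h * k) := by
        rw [mul_assoc, hP, mul_smul_comm, hP, smul_smul, mul_assoc]

theorem exists_monoidHom_of_isCoboundary_comp {P : H → (V →ₗ[ℂ] V)ˣ} {b : H → H → ℂˣ}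
    (hP : ∀ h h', P h * P h' = b h h' • P (h * h')) (θ : G →* H) (β : G → ℂˣ)
    (hβ : ∀ g g', b (θ g) (θ g') = β g * β g' * (β (g * g'))⁻¹) :
    ∃ ρ : G →* (V →ₗ[ℂ] V)ˣ, ∀ g, ρ g = (β g)⁻¹ • P (θ g) :=
  ⟨MonoidHom.mk' (fun g => (β g)⁻¹ • P (θ g)) fun g g' => by
    rw [smul_mul_smul_comm, hP, smul_smul, ← map_mul, hβ, ← mul_inv, inv_mul_cancel_left],
    fun _ => rfl⟩

end ProjectiveRepresentation

section SchurCover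

variable {G H V : Type*} [Group G] [Group H] [AddCommGroup V] [Module ℂ V]

theorem conj_eq_of_map_eq {θ : G →* H} (hcent : θ.ker ≤ Subgroup.center G) {a b : G}
    (hab : θ a = θ b) (x : G) : a * x * a⁻¹ = b * x * b⁻¹ := by
  have hk : b⁻¹ * a ∈ Subgroup.center G := hcent (by simp [MonoidHom.mem_ker, hab])
  calc a * x * a⁻¹ = b * (x * (b⁻¹ * a)) * (b⁻¹ * a)⁻¹ * b⁻¹ := by
        rw [Subgroup.mem_center_iff.mp hk x]; group
    _ = b * x * b⁻¹ := by group

theorem exists_smul_eq_of_map_eq [Countable G] [Nontrivial V] {θ : G →* H}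
    (hcent : θ.ker ≤ Subgroup.center G) {ρ : G → (V →ₗ[ℂ] V)ˣ} (hirr : QdlIrred ρ)
    {w₁ w₂ : (V →ₗ[ℂ] V)ˣ} {a b : G} (hw₁ : ∀ x, w₁ * ρ x * w₁⁻¹ = ρ (a * x * a⁻¹))
    (hw₂ : ∀ x, w₂ * ρ x * w₂⁻¹ = ρ (b * x * b⁻¹)) (hab : θ a = θ b) :
    ∃ c : ℂˣ, w₁ = c • w₂ :=
  exists_smul_eq_of_conj_eq hirr fun x => by rw [hw₁, hw₂, conj_eq_of_map_eq hcent hab]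

theorem exists_monoidHom_eq_smul [Countable G] [Nontrivial V] {θ : G →* H}
    (hsurj : Function.Surjective θ) (hcent : θ.ker ≤ Subgroup.center G)
    (hschur : ∀ α : H → H → ℂˣ,
      (∀ g h k : H, α g h * α (g * h) k = α h k * α g (h * k)) →
      ∃ β : G → ℂˣ, ∀ g g' : G, α (θ g) (θ g') = β g * β g' * (β (g * g'))⁻¹)
    {ρ : G → (V →ₗ[ℂ] V)ˣ} (hρ : ∀ g h : G, ρ (g * h * g⁻¹) = ρ g * ρ h * (ρ g)⁻¹)
    (hirr : QdlIrred ρ) :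
    ∃ (ρ' : G →* (V →ₗ[ℂ] V)ˣ) (χ : G → ℂˣ), ∀ g, ρ g = χ g • ρ' g := by
  obtain ⟨s, hs⟩ := hsurj.hasRightInverse
  have hconj (a x : G) : ρ a * ρ x * (ρ a)⁻¹ = ρ (a * x * a⁻¹) := (hρ a x).symm
  have hconj₂ (a b x : G) :
      ρ a * ρ b * ρ x * (ρ a * ρ b)⁻¹ = ρ (a * b * x * (a * b)⁻¹) := by
    rw [show ρ a * ρ b * ρ x * (ρ a * ρ b)⁻¹ = ρ a * (ρ b * ρ x * (ρ b)⁻¹) * (ρ a)⁻¹ by group,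
      hconj, hconj]
    group
  choose b hb using fun h h' => exists_smul_eq_of_map_eq hcent hirr
    (hconj₂ (s h) (s h')) (hconj (s (h * h'))) (by simp [hs h, hs h', hs (h * h')])
  choose d hd using fun g => exists_smul_eq_of_map_eq hcent hirr
    (hconj g) (hconj (s (θ g))) (hs (θ g)).symm
  obtain ⟨β, hβ⟩ := hschur b (isTwoCocycle_of_mul_eq_smul hb)
  obtain ⟨ρ', hρ'⟩ := exists_monoidHom_of_isCoboundary_comp hb θ β hβ
  exact ⟨ρ', fun g => d g * β g, fun g => by rw [hρ', smul_smul, mul_inv_cancel_right, hd]⟩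

theorem conj_invariant_of_eq_smul [Nontrivial V] {ρ : G → (V →ₗ[ℂ] V)ˣ}
    (hρ : ∀ g h : G, ρ (g * h * g⁻¹) = ρ g * ρ h * (ρ g)⁻¹) {ρ' : G →* (V →ₗ[ℂ] V)ˣ}
    {χ : G → ℂˣ} (hρχ : ∀ g, ρ g = χ g • ρ' g) (g h : G) : χ (g * h * g⁻¹) = χ h := by
  apply units_smul_left_injective (ρ' (g * h * g⁻¹))
  calc χ (g * h * g⁻¹) • ρ' (g * h * g⁻¹) = ρ g * ρ h * (ρ g)⁻¹ := by rw [← hρχ, hρ]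
    _ = (χ g * χ h * (χ g)⁻¹) • (ρ' g * ρ' h * (ρ' g)⁻¹) := by
        rw [hρχ, hρχ, smul_inv, smul_mul_smul_comm, smul_mul_smul_comm]
    _ = χ h • ρ' (g * h * g⁻¹) := by rw [mul_inv_cancel_comm, map_mul, map_mul, map_inv]

end SchurCover

theorem stmt10_general (G H : Type*) [Group G] [Finite G] [Group H]
    (θ : G →* H) (hsurj : Function.Surjective θ)
    (hcent : θ.ker ≤ Subgroup.center G)
    (hschur : ∀ α : H → H → ℂˣ,
      (∀ g h k : H, α g h * α (g * h) k = α h k * α g (h * k)) →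
      ∃ β : G → ℂˣ, ∀ g g' : G, α (θ g) (θ g') = β g * β g' * (β (g * g'))⁻¹)
    (V : Type*) [AddCommGroup V] [Module ℂ V]
    (ρ : G → (V →ₗ[ℂ] V)ˣ) (hρ : ∀ g h : G, ρ (g * h * g⁻¹) = ρ g * ρ h * (ρ g)⁻¹) :
    QdlIrred ρ ↔
      ∃ (ρ' : G →* (V →ₗ[ℂ] V)ˣ) (χ : G → ℂˣ), GrpIrred ρ' ∧
        (∀ g h : G, χ (g * h * g⁻¹) = χ h) ∧
        ∀ g : G, (ρ g : V →ₗ[ℂ] V) = (χ g : ℂ) • (ρ' g : V →ₗ[ℂ] V) := by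
  constructor
  · intro hirr
    rcases subsingleton_or_nontrivial V with hV | hV
    · exact ⟨1, 1, fun _ _ => Or.inl (Subsingleton.elim _ _), fun _ _ => rfl,
        fun _ => Subsingleton.elim _ _⟩
    obtain ⟨ρ', χ, hρχ⟩ := exists_monoidHom_eq_smul hsurj hcent hschur hρ hirr
    have hρχ' (g : G) : (ρ g : V →ₗ[ℂ] V) = (χ g : ℂ) • (ρ' g : V →ₗ[ℂ] V) := by
      rw [hρχ, val_units_smul]
    exact ⟨ρ', χ, (qdlIrred_iff_of_forall_eq_smul χ hρχ').mp hirr,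
      conj_invariant_of_eq_smul hρ hρχ, hρχ'⟩
  · rintro ⟨ρ', χ, hirr', -, hρχ⟩
    exact (qdlIrred_iff_of_forall_eq_smul χ hρχ).mpr hirr'

/-- if `G` is a finite Schur cover of a finite group `H` (via `θ`), then a
representation of the quandle `Conj(G)` is irreducible iff it is the product of a
conjugation-invariant `ℂˣ`-valued function and an irreducible linear representation of `G`. -/
theorem stmt10 (G H : Type*) [Group G] [Finite G] [Group H] [Finite H]
    (θ : G →* H) (hsurj : Function.Surjective θ)
    (hcent : θ.ker ≤ Subgroup.center G) (hcomm : θ.ker ≤ commutator G)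
    (hschur : ∀ α : H → H → ℂˣ,
      (∀ g h k : H, α g h * α (g * h) k = α h k * α g (h * k)) →
      ∃ β : G → ℂˣ, ∀ g g' : G, α (θ g) (θ g') = β g * β g' * (β (g * g'))⁻¹)
    (V : Type*) [AddCommGroup V] [Module ℂ V]
    (ρ : G → (V →ₗ[ℂ] V)ˣ) (hρ : ∀ g h : G, ρ (g * h * g⁻¹) = ρ g * ρ h * (ρ g)⁻¹) :
    QdlIrred ρ ↔
      ∃ (ρ' : G →* (V →ₗ[ℂ] V)ˣ) (χ : G → ℂˣ), GrpIrred ρ' ∧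
        (∀ g h : G, χ (g * h * g⁻¹) = χ h) ∧
        ∀ g : G, (ρ g : V →ₗ[ℂ] V) = (χ g : ℂ) • (ρ' g : V →ₗ[ℂ] V) :=
  stmt10_general G H θ hsurj hcent hschur V ρ hρ
end
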